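/- arXiv:0911.1174 — 8 statements merged into one kernel-verified Lean document; each statement's English description precedes it below -/
import Mathlib

section
/- If a compact metric space (X,d) admits a topological well-ordering, then X is countable. -/
/-!
Every point `x` that is not the maximum has an immediate successor `x⁺`, and then the closed
initial segment `Iic x = Iio x⁺` is an open neighbourhood of `x`. Choosing for each such `x` a
basic open set `x ∈ b ⊆ Iic x` from a countable basis (compact metric spaces are second
countable) gives an injection into the basis, by antisymmetry.
-/

open Set Filter Topology TopologicalSpace

theorem countable_setOf_Iic_mem_nhds {X : Type*} [TopologicalSpace X] [SecondCountableTopology X]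
    [PartialOrder X] : {x : X | Iic x ∈ 𝓝 x}.Countable := by
  have hbasis : ∀ x ∈ {x : X | Iic x ∈ 𝓝 x}, ∃ b ∈ countableBasis X, x ∈ b ∧ b ⊆ Iic x :=
    fun x hx => (isBasis_countableBasis X).mem_nhds_iff.mp hx
  choose! b hbB hxb hbIic using hbasis
  have hinj : InjOn b {x | Iic x ∈ 𝓝 x} := fun x hx y hy hxy =>
    le_antisymm (hbIic y hy (hxy ▸ hxb x hx)) (hbIic x hx (hxy ▸ hxb y hy))
  exact countable_of_injective_of_countable_image hinj
    ((countable_countableBasis X).mono (image_subset_iff.mpr hbB))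

theorem countable_of_isOpen_Iio {X : Type*} [TopologicalSpace X] [SecondCountableTopology X]
    [LinearOrder X] [WellFoundedLT X] (hopen : ∀ x : X, IsOpen (Iio x)) : Countable X := by
  let := SuccOrder.ofLinearWellFoundedLT X
  have hnotMax : {x : X | ¬IsMax x} ⊆ {x | Iic x ∈ 𝓝 x} := fun x hx => by
    change Iic x ∈ 𝓝 x
    rw [← Order.Iio_succ_of_not_isMax hx]
    exact (hopen _).mem_nhds (Order.lt_succ_of_not_isMax hx)
  have hMax : {x : X | IsMax x}.Subsingleton := fun x hx y hy =>
    (le_total x y).elim (fun h => (hx.eq_of_ge h).symm) (fun h => hy.eq_of_ge h)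
  rw [← countable_univ_iff, ← union_compl_self {x : X | IsMax x}]
  exact hMax.countable.union (countable_setOf_Iic_mem_nhds.mono hnotMax)

/-- If a compact metric space admits a topological well-ordering (a well-order all of
whose initial segments are open in the metric topology), then `X` is countable. -/
theorem stmt_3 {X : Type*} [MetricSpace X] [CompactSpace X]
    (r : X → X → Prop) (hwo : IsWellOrder X r)
    (hopen : ∀ x : X, IsOpen {y : X | r y x}) :
    Countable X := by
  classical
  let := linearOrderOfSTO r
  have : WellFoundedLT X := ⟨hwo.wf⟩
  exact countable_of_isOpen_Iio hopen
end

section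
/- If a metric space (X,d) admits a topological well-ordering, then no subspace of X is perfect. -/
/-! Let `m` be the least point of `Y`. If `Y = {m}` there is nothing to show; otherwise let `m'` be
the least point of `Y \ {m}`. The open initial segment below `m'` contains `m` and no other point
of `Y`, so `m` is isolated in `Y`. -/

namespace IsWellOrder

variable {X : Type*} {r : X → X → Prop}

theorem setOf_rel_min_diff_inter_eq (hr : IsWellOrder X r) {Y : Set X} (hY : Y.Nonempty)
    (hY' : (Y \ {hr.wf.min Y hY}).Nonempty) :
    {z | r z (hr.wf.min _ hY')} ∩ Y = {hr.wf.min Y hY} := by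
  set m := hr.wf.min Y hY
  set m' := hr.wf.min _ hY'
  have hm' : m' ∈ Y \ {m} := hr.wf.min_mem _ hY'
  have hmm' : r m m' := by
    rcases trichotomous_of r m m' with h | h | h
    · exact h
    · exact absurd h.symm hm'.2
    · exact absurd h (hr.wf.not_lt_min Y hm'.1)
  ext z
  simp only [Set.mem_inter_iff, Set.mem_ofPred_eq, Set.mem_singleton_iff]
  constructor
  · rintro ⟨hzm', hzY⟩
    by_contra hzm
    exact hr.wf.not_lt_min (Y \ {m}) (x := z) ⟨hzY, hzm⟩ hzm'
  · rintro rfl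
    exact ⟨hmm', hr.wf.min_mem Y hY⟩

theorem exists_isOpen_inter_eq_singleton [TopologicalSpace X] (hr : IsWellOrder X r)
    (hopen : ∀ x : X, IsOpen {y : X | r y x}) {Y : Set X} (hY : Y.Nonempty) :
    ∃ y ∈ Y, ∃ U : Set X, IsOpen U ∧ U ∩ Y = {y} := by
  refine ⟨hr.wf.min Y hY, hr.wf.min_mem Y hY, ?_⟩
  rcases (Y \ {hr.wf.min Y hY}).eq_empty_or_nonempty with hY' | hY'
  · refine ⟨Set.univ, isOpen_univ, ?_⟩
    rw [Set.univ_inter]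
    exact hY.subset_singleton_iff.mp (Set.sdiff_eq_empty.mp hY')
  · exact ⟨_, hopen _, hr.setOf_rel_min_diff_inter_eq hY hY'⟩

end IsWellOrder

/-- If a metric space admits a topological well-ordering, then no subspace of it is
perfect: every nonempty subset has a point isolated in its subspace topology. -/
theorem stmt_4 {X : Type*} [MetricSpace X]
    (r : X → X → Prop) (hwo : IsWellOrder X r)
    (hopen : ∀ x : X, IsOpen {y : X | r y x}) :
    ∀ Y : Set X, Y.Nonempty → ∃ y ∈ Y, ∃ U : Set X, IsOpen U ∧ U ∩ Y = {y} :=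
  fun _ hY => hwo.exists_isOpen_inter_eq_singleton hopen hY
end

section
/- If (X,d) is a metric space, X₂ ⊆ X is the set of limit points of X, X₁ = X \ X₂, and (X₂,d) admits a topological well-ordering, then (X,d) admits a topological well-ordering. -/
open Filter Topology

/-- Every subset of the complement of the derived set of `univ` is open. -/
lemma aux_open_of_isolated {X : Type*} [TopologicalSpace X] {S : Set X}
    (hS : ∀ x ∈ S, x ∉ derivedSet (Set.univ : Set X)) : IsOpen S := by
  have : S = ⋃ x ∈ S, {x} := by simp
  rw [this]
  refine isOpen_biUnion fun x hx => ?_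
  rw [isOpen_singleton_iff_punctured_nhds]
  have := hS x hx
  rw [mem_derivedSet, AccPt] at this
  simpa [not_neBot] using this

/-- If `X₂` is the set of limit points of a metric space `X` (so `X₁ = X \ X₂` is the
set of isolated points), and the subspace `X₂` admits a topological well-ordering,
then `X` admits a topological well-ordering. -/
theorem stmt_6 {X : Type*} [MetricSpace X]
    (X₂ : Set X) (hX₂ : X₂ = derivedSet (Set.univ : Set X))
    (X₁ : Set X) (hX₁ : X₁ = Set.univ \ X₂)
    (h : ∃ r : X₂ → X₂ → Prop, IsWellOrder X₂ r ∧
      ∀ x : X₂, IsOpen {y : X₂ | r y x}) :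
    ∃ r : X → X → Prop, IsWellOrder X r ∧ ∀ x : X, IsOpen {y : X | r y x} := by
  classical
  obtain ⟨r, hwo, hopen⟩ := h
  -- the equivalence X ≃ ↥X₂ᶜ ⊕ ↥X₂
  let f : X ≃ (↥(X₂ᶜ) ⊕ ↥X₂) :=
    { toFun := fun x => if h : x ∈ X₂ then Sum.inr ⟨x, h⟩ else Sum.inl ⟨x, h⟩
      invFun := Sum.elim Subtype.val Subtype.val
      left_inv := fun x => by by_cases h : x ∈ X₂ <;> simp [h]
      right_inv := fun y => by
        rcases y with ⟨y, hy⟩ | ⟨y, hy⟩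
        · have hy' : y ∉ X₂ := hy
          simp [hy']
        · simp [hy] }
  have hf₂ : ∀ (y : X) (hy : y ∈ X₂), f y = Sum.inr ⟨y, hy⟩ := fun y hy => dif_pos hy
  have hf₁ : ∀ (y : X) (hy : y ∉ X₂), f y = Sum.inl ⟨y, hy⟩ := fun y hy => dif_neg hy
  haveI := hwo
  haveI : IsWellOrder (↥(X₂ᶜ) ⊕ ↥X₂) (Sum.Lex (WellOrderingRel) r) := by infer_instance
  refine ⟨f ⁻¹'o Sum.Lex (WellOrderingRel) r, RelIso.IsWellOrder.preimage _ f, ?_⟩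
  intro x
  have hmem : ∀ y : X, (f ⁻¹'o Sum.Lex (WellOrderingRel) r) y x ↔
      Sum.Lex (WellOrderingRel) r (f y) (f x) := fun _ => Iff.rfl
  by_cases hx : x ∈ X₂
  · obtain ⟨U, hU, hUeq⟩ := isOpen_induced_iff.mp (hopen ⟨x, hx⟩)
    have hset : {y : X | (f ⁻¹'o Sum.Lex (WellOrderingRel) r) y x} = X₂ᶜ ∪ U := by
      ext y
      simp only [Set.mem_setOf_eq, hmem, hf₂ x hx, Set.mem_union, Set.mem_compl_iff]
      by_cases hy : y ∈ X₂
      · have hyU : y ∈ U ↔ r ⟨y, hy⟩ ⟨x, hx⟩ := by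
          have := Set.ext_iff.mp hUeq ⟨y, hy⟩
          simpa using this
        rw [hf₂ y hy]
        simp [Sum.lex_inr_inr, hy, hyU]
      · rw [hf₁ y hy]
        simp [hy, Sum.Lex.sep]
    rw [hset]
    refine IsOpen.union ?_ hU
    exact aux_open_of_isolated fun z hz => by rw [← hX₂]; exact hz
  · have hset : ∀ y ∈ {y : X | (f ⁻¹'o Sum.Lex (WellOrderingRel) r) y x},
        y ∉ derivedSet (Set.univ : Set X) := by
      intro y hy
      rw [← hX₂]
      intro hy2
      rw [Set.mem_setOf_eq, hmem, hf₂ y hy2, hf₁ x hx] at hy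
      exact Sum.lex_inr_inl hy
    exact aux_open_of_isolated hset
end

section
/- Every metric space of finite Cantor-Bendixson rank admits a topological well-ordering; that is, if iterating the operation S ↦ lim(S) (taking limit points within the space) starting from X reaches the empty set after finitely many steps, then X admits a well-ordering in which every initial segment is open. -/
/-- Every metric space of finite Cantor-Bendixson rank admits a topological
well-ordering: if iterating the derived-set operation starting from `X` reaches the
empty set after finitely many steps, then `X` admits a well-ordering all of whose
initial segments are open. -/
theorem stmt_7 {X : Type*} [MetricSpace X]
    (h : ∃ n : ℕ, (fun S : Set X => derivedSet S)^[n] Set.univ = ∅) :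
    ∃ r : X → X → Prop, IsWellOrder X r ∧ ∀ x : X, IsOpen {y : X | r y x} := by
  classical
  obtain ⟨n, hn⟩ := h
  set D : ℕ → Set X := fun i => (fun S : Set X => derivedSet S)^[i] Set.univ with hD
  have hstep : ∀ i, D (i + 1) = derivedSet (D i) := by
    intro i
    simp [hD, Function.iterate_succ_apply']
  have hclosed : ∀ i, IsClosed (D i) := by
    intro i
    induction i with
    | zero => simp only [hD, Function.iterate_zero, id]; exact isClosed_univ
    | succ k _ => rw [hstep]; exact isClosed_derivedSet _
  have hsub : ∀ i, D (i + 1) ⊆ D i := by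
    intro i
    rw [hstep]
    exact (derivedSet_subset_closure _).trans (hclosed i).closure_subset
  have hanti : ∀ {i j : ℕ}, i ≤ j → D j ⊆ D i := by
    intro i j hij
    induction hij with
    | refl => exact subset_rfl
    | step _ ih => exact fun x hx => (ih (hsub _ hx) : _)
  have hex : ∀ x : X, ∃ i, x ∉ D i := fun x => ⟨n, by simp [hD, hn]⟩
  set ρ : X → ℕ := fun x => Nat.find (hex x) with hρ
  have hρ_notmem : ∀ x, x ∉ D (ρ x) := fun x => Nat.find_spec (hex x)
  have hρ_mem : ∀ x, ∀ i < ρ x, x ∈ D i := by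
    intro x i hi
    by_contra hc
    exact absurd (Nat.find_le hc) (not_le.mpr hi)
  have hρ_pos : ∀ x, 0 < ρ x := by
    intro x
    rcases Nat.eq_zero_or_pos (ρ x) with h0 | h0
    · exact absurd (hρ_notmem x) (by rw [h0]; simp [hD])
    · exact h0
  -- key: ρ y < ρ x ↔ y ∉ D (ρ x - 1)
  have hlt : ∀ x y : X, ρ y < ρ x ↔ y ∉ D (ρ x - 1) := by
    intro x y
    constructor
    · intro hlt hmem
      have : ρ x - 1 < ρ y := by
        by_contra hc
        exact hρ_notmem y (hanti (not_lt.mp hc) hmem)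
      omega
    · intro hnm
      have h1 : ρ y ≤ ρ x - 1 := Nat.find_min' (hex y) hnm
      have := hρ_pos x
      omega
  refine ⟨fun a b => Prod.Lex (· < ·) (WellOrderingRel) (ρ a, a) (ρ b, b), ?_, ?_⟩
  · exact (RelEmbedding.mk ⟨fun x => (ρ x, x), fun a b hab => congrArg Prod.snd hab⟩
      Iff.rfl).isWellOrder
  · intro x
    rw [isOpen_iff_forall_mem_open]
    intro z hz
    simp only [Set.mem_setOf_eq, Prod.lex_def] at hz
    rcases hz with hlt' | ⟨heq, hwr⟩
    · refine ⟨(D (ρ x - 1))ᶜ, ?_, (hclosed _).isOpen_compl, (hlt x z).mp hlt'⟩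
      intro y hy
      simp only [Set.mem_setOf_eq, Prod.lex_def]
      exact Or.inl ((hlt x y).mpr hy)
    · -- z has same rank as x; z is isolated in D (ρ x - 1)
      have hzmem : z ∈ D (ρ x - 1) := by
        rw [← heq]; exact hρ_mem z _ (by have := hρ_pos z; omega)
      have hznot : z ∉ derivedSet (D (ρ x - 1)) := by
        rw [← hstep]
        have : ρ x - 1 + 1 = ρ x := by have := hρ_pos x; omega
        rw [this, ← heq]
        exact hρ_notmem z
      rw [mem_derivedSet, accPt_iff_nhds] at hznot
      push_neg at hznot
      obtain ⟨U, hU, hU2⟩ := hznot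
      obtain ⟨V, hVU, hVopen, hzV⟩ := mem_nhds_iff.mp hU
      refine ⟨V, ?_, hVopen, hzV⟩
      intro y hy
      simp only [Set.mem_setOf_eq, Prod.lex_def]
      by_cases hyz : y = z
      · subst hyz; exact Or.inr ⟨heq, hwr⟩
      · left
        apply (hlt x y).mpr
        intro hyD
        exact hyz (hU2 y ⟨hVU hy, hyD⟩)
end

section
/- Let (X,d) be a metric space, let H denote the Hamming distance on {0,1}^n, and let S ⊆ X be a subset of cardinality 2n such that any two distinct points of S are at distance at least ε > 0. Then there is a map f from {0,1}^n to the space of probability measures on X (equipped with the Wasserstein-1 distance W₁) such that W₁(f(a), f(b)) ≥ (ε/n)·H(a,b) for all a, b ∈ {0,1}^n. -/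
/-!
Enumerate `S` as `e : Fin n × Bool ≃ S` and send `a` to the uniform measure on the `n` points
`e (i, a i)`. Given `a, b`, let `s` be the set of points `e (i, a i)` with `a i ≠ b i`: it carries
mass `H(a,b)/n` under `f a` and none under `f b`. Any coupling of `f a` and `f b` therefore moves
mass at least `H(a,b)/n` from `s` to its complement, i.e. between distinct points of `S`, at cost
at least `ε` per unit mass.
-/

open MeasureTheory

noncomputable def wasserstein1 {X : Type*} [MetricSpace X] [MeasurableSpace X]
    (μ ν : Measure X) : ℝ :=
  sInf {c : ℝ | ∃ π : Measure (X × X), IsProbabilityMeasure π ∧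
    π.map Prod.fst = μ ∧ π.map Prod.snd = ν ∧ c = ∫ p, dist p.1 p.2 ∂π}

open scoped ENNReal
open Set Finset

namespace MeasureTheory

variable {X : Type*} [MeasurableSpace X]

section Coupling

variable {π : Measure (X × X)} {μ ν : Measure X}

theorem ae_mem_prod_of_map_fst_of_map_snd (hfst : π.map Prod.fst = μ)
    (hsnd : π.map Prod.snd = ν) {S : Set X} (hμS : ∀ᵐ x ∂μ, x ∈ S) (hνS : ∀ᵐ x ∂ν, x ∈ S) :
    ∀ᵐ p ∂π, p ∈ S ×ˢ S := by
  subst hfst hsnd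
  filter_upwards [ae_of_ae_map measurable_fst.aemeasurable hμS,
    ae_of_ae_map measurable_snd.aemeasurable hνS] with p h1 h2
  exact ⟨h1, h2⟩

theorem measureReal_sub_le_measureReal_preimage_diff [IsFiniteMeasure π]
    (hfst : π.map Prod.fst = μ) (hsnd : π.map Prod.snd = ν) {s : Set X} (hs : MeasurableSet s) :
    μ.real s - ν.real s ≤ π.real (Prod.fst ⁻¹' s \ Prod.snd ⁻¹' s) := by
  subst hfst hsnd
  rw [map_measureReal_apply measurable_fst hs, map_measureReal_apply measurable_snd hs,
    sub_le_iff_le_add]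
  calc π.real (Prod.fst ⁻¹' s)
      ≤ π.real ((Prod.fst ⁻¹' s \ Prod.snd ⁻¹' s) ∪ Prod.snd ⁻¹' s) :=
        measureReal_mono (subset_sdiff_union _ _)
    _ ≤ _ := measureReal_union_le _ _

end Coupling

section Empirical

variable {ι : Type*} [Fintype ι]

noncomputable def empiricalMeasure (x : ι → X) : Measure X :=
  (Fintype.card ι : ℝ≥0∞)⁻¹ • ∑ i, Measure.dirac (x i)

variable (x : ι → X)

open scoped Classical in
theorem empiricalMeasure_apply {s : Set X} (hs : MeasurableSet s) :
    empiricalMeasure x s = #{i | x i ∈ s} / Fintype.card ι := by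
  simp [empiricalMeasure, Measure.finsetSum_apply, Measure.dirac_apply' _ hs,
    Set.indicator_apply, Finset.sum_boole, ENNReal.div_eq_inv_mul]

open scoped Classical in
theorem empiricalMeasure_real_apply {s : Set X} (hs : MeasurableSet s) :
    (empiricalMeasure x).real s = #{i | x i ∈ s} / Fintype.card ι := by
  simp [measureReal_def, empiricalMeasure_apply x hs, ENNReal.toReal_div]

instance [Nonempty ι] : IsProbabilityMeasure (empiricalMeasure x) := by
  constructor
  rw [empiricalMeasure_apply x MeasurableSet.univ]
  simpa using ENNReal.div_self (by simp) (by simp)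

theorem ae_empiricalMeasure_mem {S : Set X} (hS : MeasurableSet S) (hx : ∀ i, x i ∈ S) :
    ∀ᵐ y ∂empiricalMeasure x, y ∈ S := by
  rw [ae_iff, ← compl_def, empiricalMeasure_apply x hS.compl]
  simp [hx]

end Empirical

end MeasureTheory

section Transport

variable {X : Type*} [MetricSpace X] [MeasurableSpace X] [MeasurableSingletonClass X]
  {S : Set X} {ε : ℝ}

theorem mul_measureReal_preimage_diff_le_integral_dist {π : Measure (X × X)} [IsFiniteMeasure π]
    (hS : S.Finite) (hsep : S.Pairwise fun x y => ε ≤ dist x y) (hπS : ∀ᵐ p ∂π, p ∈ S ×ˢ S)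
    {s : Set X} (hs : MeasurableSet s) :
    ε * π.real (Prod.fst ⁻¹' s \ Prod.snd ⁻¹' s) ≤ ∫ p, dist p.1 p.2 ∂π := by
  have hA : MeasurableSet (Prod.fst ⁻¹' s \ Prod.snd ⁻¹' s : Set (X × X)) :=
    (measurable_fst hs).diff (measurable_snd hs)
  have hint : Integrable (fun p : X × X => dist p.1 p.2) π := by
    rw [← Measure.restrict_eq_self_of_ae_mem hπS]
    exact IntegrableOn.of_finite (hS.prod hS)
  rw [mul_comm, ← smul_eq_mul, ← integral_indicator_const ε hA]
  refine integral_mono_ae ((integrable_const ε).indicator hA) hint ?_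
  filter_upwards [hπS] with p ⟨h1, h2⟩
  by_cases hp : p ∈ Prod.fst ⁻¹' s \ Prod.snd ⁻¹' s
  · rw [indicator_of_mem hp]
    exact hsep h1 h2 fun h => hp.2 (by simpa [h] using hp.1)
  · rw [indicator_of_notMem hp]
    exact dist_nonneg

theorem mul_sub_le_wasserstein1 {μ ν : Measure X} [IsProbabilityMeasure μ]
    [IsProbabilityMeasure ν] (hε : 0 ≤ ε) (hS : S.Finite)
    (hsep : S.Pairwise fun x y => ε ≤ dist x y) (hμS : ∀ᵐ x ∂μ, x ∈ S) (hνS : ∀ᵐ x ∂ν, x ∈ S)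
    {s : Set X} (hs : MeasurableSet s) :
    ε * (μ.real s - ν.real s) ≤ wasserstein1 μ ν := by
  refine le_csInf ⟨_, μ.prod ν, inferInstance, Measure.fst_prod, Measure.snd_prod, rfl⟩ ?_
  rintro _ ⟨π, hπ, hfst, hsnd, rfl⟩
  calc ε * (μ.real s - ν.real s)
      ≤ ε * π.real (Prod.fst ⁻¹' s \ Prod.snd ⁻¹' s) :=
        mul_le_mul_of_nonneg_left (measureReal_sub_le_measureReal_preimage_diff hfst hsnd hs) hε
    _ ≤ ∫ p, dist p.1 p.2 ∂π := mul_measureReal_preimage_diff_le_integral_dist hS hsep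
        (ae_mem_prod_of_map_fst_of_map_snd hfst hsnd hμS hνS) hs

end Transport

theorem Function.Injective.mem_image_graph_iff {ι X : Type*} {g : ι × Bool → X}
    (hg : Function.Injective g) (a c : ι → Bool) (K : Set ι) (i : ι) :
    g (i, c i) ∈ (fun j => g (j, a j)) '' K ↔ i ∈ K ∧ c i = a i := by
  refine ⟨?_, fun ⟨hi, hc⟩ => ⟨i, hi, by rw [hc]⟩⟩
  rintro ⟨j, hj, hji⟩
  obtain ⟨rfl, haj⟩ := Prod.ext_iff.mp (hg hji)
  exact ⟨hj, haj.symm⟩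

/-- Embedding the Hamming cube into Wasserstein space: if `S ⊆ X` has `2n` points,
pairwise at distance at least `ε > 0`, then there is a map `f` from `{0,1}^n` to the
probability measures on `X` such that `W₁(f a, f b) ≥ (ε/n) · H(a,b)` for all `a, b`,
where `H` is the Hamming distance. -/
theorem stmt_12 {X : Type*} [MetricSpace X] [MeasurableSpace X] [BorelSpace X]
    (n : ℕ) (hn : 0 < n) (S : Finset X) (hcard : S.card = 2 * n)
    (ε : ℝ) (hε : 0 < ε)
    (hsep : ∀ x ∈ S, ∀ y ∈ S, x ≠ y → ε ≤ dist x y) :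
    ∃ f : (Fin n → Bool) → Measure X,
      (∀ a, IsProbabilityMeasure (f a)) ∧
      ∀ a b : Fin n → Bool,
        (ε / n) * ((Finset.univ.filter fun i => a i ≠ b i).card : ℝ) ≤
          wasserstein1 (f a) (f b) := by
  classical
  have : Nonempty (Fin n) := Fin.pos_iff_nonempty.mp hn
  let e : Fin n × Bool ≃ S := Fintype.equivOfCardEq (by simp [hcard, mul_comm])
  let x : (Fin n → Bool) → Fin n → X := fun a i => e (i, a i)
  have hxS : ∀ c, ∀ᵐ y ∂empiricalMeasure (x c), y ∈ (S : Set X) := fun c =>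
    ae_empiricalMeasure_mem _ S.finite_toSet.measurableSet fun i => (e _).2
  refine ⟨fun a => empiricalMeasure (x a), fun a => inferInstance, fun a b => ?_⟩
  set K := Finset.univ.filter fun i => a i ≠ b i
  have hmem : ∀ c i, x c i ∈ x a '' K ↔ i ∈ K ∧ c i = a i :=
    fun c => (Subtype.val_injective.comp e.injective).mem_image_graph_iff a c K
  have hcount_a : (univ.filter fun i => x a i ∈ x a '' K) = K := by ext i; simp [hmem]
  have hcount_b : (univ.filter fun i => x b i ∈ x a '' K) = ∅ :=
    filter_eq_empty_iff.mpr fun i _ hi => by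
      obtain ⟨hiK, hba⟩ := (hmem b i).mp hi
      exact (mem_filter.mp hiK).2 hba.symm
  have hK : MeasurableSet (x a '' K) := (K.finite_toSet.image _).measurableSet
  have hW := mul_sub_le_wasserstein1 hε.le S.finite_toSet hsep (hxS a) (hxS b) hK
  rw [empiricalMeasure_real_apply _ hK, empiricalMeasure_real_apply _ hK, hcount_a,
    hcount_b] at hW
  convert hW using 1
  simp only [Finset.card_empty, Fintype.card_fin, CharP.cast_eq_zero, zero_div, sub_zero]
  ring
end

section
/- Let (X,d) be a metric space of finite diameter whose covering dimension is κ < ∞. Then the log-covering dimension of the space of probability measures on X equipped with the Wasserstein-1 metric is at most κ: LCD(P_X, W₁) ≤ κ. -/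
open MeasureTheory Filter

/-- The covering number `N_δ(Y)`: the minimal number of sets of `ρ`-diameter at most
`δ` needed to cover `Y` (`⊤` if no finite cover exists). -/
noncomputable def coveringNumber {α : Type*} (ρ : α → α → ℝ) (Y : Set α) (δ : ℝ) : ℕ∞ :=
  sInf {n : ℕ∞ | ∃ C : Finset (Set α), n = C.card ∧
    (∀ s ∈ C, ∀ x ∈ s, ∀ y ∈ s, ρ x y ≤ δ) ∧ Y ⊆ ⋃ s ∈ C, s}

/-- The covering dimension `Cov(Y) = limsup_{δ→0⁺} log N_δ(Y) / log(1/δ)`. -/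
noncomputable def covDim {α : Type*} (ρ : α → α → ℝ) (Y : Set α) : EReal :=
  limsup (fun δ : ℝ =>
      if coveringNumber ρ Y δ = ⊤ then (⊤ : EReal)
      else ((Real.log (((coveringNumber ρ Y δ).toNat : ℝ)) / Real.log (1 / δ) : ℝ) : EReal))
    (nhdsWithin 0 (Set.Ioi 0))

/-- The log-covering dimension `LCD(Y) = limsup_{δ→0⁺} log log N_δ(Y) / log(1/δ)`. -/
noncomputable def logCovDim {α : Type*} (ρ : α → α → ℝ) (Y : Set α) : EReal :=
  limsup (fun δ : ℝ =>
      if coveringNumber ρ Y δ = ⊤ then (⊤ : EReal)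
      else ((Real.log (Real.log (((coveringNumber ρ Y δ).toNat : ℝ))) / Real.log (1 / δ) : ℝ) : EReal))
    (nhdsWithin 0 (Set.Ioi 0))

/-!
Cover `X` by `n = N_{δ/2}(X)` cells of diameter `≤ δ/2` and round the masses that a probability
measure gives to the cells down to multiples of `η ≈ δ / (2 n D)`, where `D` bounds the diameter
of `X`. Two measures with the same rounded masses are coupled inside each cell on their common
mass, at cost `≤ δ/2`, and arbitrarily on the remaining mass `≤ n η`, at cost `≤ D`; so they are
`δ`-close in `W₁`. Hence `N_δ(P_X) ≤ (C n / δ)^n`, and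
`log log N_δ(P_X) ≤ log n + O(log log (1/δ)) ≤ (κ + o(1)) log (1/δ)`.
-/

open scoped ENNReal NNReal
open Set Function

section CoveringNumber

variable {α : Type*} {ρ : α → α → ℝ} {Y : Set α}

theorem coveringNumber_antitone : Antitone (coveringNumber ρ Y) := fun _ _ h =>
  sInf_le_sInf fun _ ⟨C, hn, hdiam, hcov⟩ =>
    ⟨C, hn, fun s hs x hx y hy => (hdiam s hs x hx y hy).trans h, hcov⟩

theorem exists_finset_card_eq_of_coveringNumber_eq {δ : ℝ} {n : ℕ}
    (hn : coveringNumber ρ Y δ = n) :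
    ∃ C : Finset (Set α), C.card = n ∧
      (∀ s ∈ C, ∀ x ∈ s, ∀ y ∈ s, ρ x y ≤ δ) ∧ Y ⊆ ⋃ s ∈ C, s := by
  have hne : {n : ℕ∞ | ∃ C : Finset (Set α), n = C.card ∧
      (∀ s ∈ C, ∀ x ∈ s, ∀ y ∈ s, ρ x y ≤ δ) ∧ Y ⊆ ⋃ s ∈ C, s}.Nonempty := by
    by_contra h
    rw [not_nonempty_iff_eq_empty] at h
    simp [coveringNumber, h] at hn
  obtain ⟨C, hC, hdiam, hcov⟩ := csInf_mem hne
  exact ⟨C, by exact_mod_cast hC.symm.trans hn, hdiam, hcov⟩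

theorem coveringNumber_le_card {δ : ℝ} (C : Finset (Set α))
    (hdiam : ∀ s ∈ C, ∀ x ∈ s, ∀ y ∈ s, ρ x y ≤ δ) (hcov : Y ⊆ ⋃ s ∈ C, s) :
    coveringNumber ρ Y δ ≤ C.card :=
  sInf_le ⟨C, rfl, hdiam, hcov⟩

theorem coveringNumber_le_of_fibers {β : Type*} (f : α → β) (T : Finset β) {δ : ℝ}
    (hmaps : ∀ x ∈ Y, f x ∈ T) (hfiber : ∀ x ∈ Y, ∀ y ∈ Y, f x = f y → ρ x y ≤ δ) :
    coveringNumber ρ Y δ ≤ T.card := by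
  classical
  refine (coveringNumber_le_card (T.image fun b => {x ∈ Y | f x = b}) ?_ ?_).trans
    (by exact_mod_cast Finset.card_image_le)
  · simp only [Finset.mem_image]
    rintro _ ⟨b, -, rfl⟩ x ⟨hx, rfl⟩ y ⟨hy, hxy⟩
    exact hfiber x hx y hy hxy.symm
  · intro x hx
    simp only [Finset.mem_image, mem_iUnion, exists_prop]
    exact ⟨_, ⟨f x, hmaps x hx, rfl⟩, hx, rfl⟩

theorem covDim_nonneg (ρ : α → α → ℝ) (Y : Set α) : 0 ≤ covDim ρ Y := by
  refine le_limsup_of_frequently_le (Eventually.frequently ?_) (by isBoundedDefault)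
  filter_upwards [Ioo_mem_nhdsGT one_pos] with δ hδ
  split_ifs
  · exact le_top
  · exact EReal.coe_nonneg.mpr <| div_nonneg (Real.log_natCast_nonneg _)
      (Real.log_nonneg <| one_le_one_div hδ.1 hδ.2.le)

theorem eventually_coveringNumber_lt_of_covDim_lt {k : ℝ} (hk : covDim ρ Y < k) :
    ∀ᶠ δ in nhdsWithin 0 (Ioi 0), ∃ n : ℕ, coveringNumber ρ Y δ = n ∧
      Real.log n < k * Real.log (1 / δ) := by
  filter_upwards [eventually_lt_of_limsup_lt hk, Ioo_mem_nhdsGT one_pos] with δ hlt hδ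
  split_ifs at hlt with htop
  · exact absurd hlt not_top_lt
  · refine ⟨_, (ENat.natCast_toNat htop).symm, ?_⟩
    rw [EReal.coe_lt_coe_iff, div_lt_iff₀ (Real.log_pos (one_lt_one_div hδ.1 hδ.2))] at hlt
    exact hlt

theorem logCovDim_le_of_forall_eventually {κ : ℝ}
    (h : ∀ ε > 0, ∀ᶠ δ in nhdsWithin 0 (Ioi 0), ∃ m : ℕ, coveringNumber ρ Y δ = m ∧
      Real.log (Real.log m) ≤ (κ + ε) * Real.log (1 / δ)) :
    logCovDim ρ Y ≤ κ := by
  refine EReal.le_of_forall_lt_iff_le.mp fun z hz => limsup_le_of_le (by isBoundedDefault) ?_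
  have hε : 0 < z - κ := sub_pos.mpr (EReal.coe_lt_coe_iff.mp hz)
  filter_upwards [h _ hε, Ioo_mem_nhdsGT one_pos] with δ ⟨m, hm, hlog⟩ hδ
  rw [hm, if_neg (ENat.natCast_ne_top m), ENat.toNat_natCast, EReal.coe_le_coe_iff,
    div_le_iff₀ (Real.log_pos (one_lt_one_div hδ.1 hδ.2))]
  simpa using hlog

end CoveringNumber

section Partition

variable {X : Type*} [MetricSpace X]

theorem dist_le_of_mem_closure {s : Set X} {d : ℝ} (h : ∀ x ∈ s, ∀ y ∈ s, dist x y ≤ d)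
    {x y : X} (hx : x ∈ closure s) (hy : y ∈ closure s) : dist x y ≤ d := by
  have hsub : closure (s ×ˢ s) ⊆ {p : X × X | dist p.1 p.2 ≤ d} :=
    closure_minimal (fun p hp => h _ hp.1 _ hp.2) (isClosed_le continuous_dist continuous_const)
  exact hsub (show (x, y) ∈ closure (s ×ˢ s) by rw [closure_prod_eq]; exact ⟨hx, hy⟩)

-- The sets of a cover need not be measurable; their closures are, with the same diameter bound.
theorem exists_measurable_partition_of_coveringNumber_eq [MeasurableSpace X]
    [OpensMeasurableSpace X] {d : ℝ} {n : ℕ}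
    (hn : coveringNumber (fun x y : X => dist x y) univ d = n) :
    ∃ B : Fin n → Set X, (∀ i, MeasurableSet (B i)) ∧ Pairwise (Disjoint on B) ∧
      ⋃ i, B i = univ ∧ ∀ i, ∀ x ∈ B i, ∀ y ∈ B i, dist x y ≤ d := by
  obtain ⟨C, hcard, hdiam, hcov⟩ := exists_finset_card_eq_of_coveringNumber_eq hn
  let t : Fin n → Set X := fun i => closure (C.equivFin.symm (Fin.cast hcard.symm i))
  have ht : ∀ i, MeasurableSet (t i) := fun i => isClosed_closure.measurableSet
  refine ⟨disjointed t, fun i => ?_, disjoint_disjointed t, ?_, fun i x hx y hy => ?_⟩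
  · rw [disjointed_eq_inter_compl]
    exact (ht i).inter (.iInter fun j => .iInter fun _ => (ht j).compl)
  · refine iUnion_disjointed.trans (eq_univ_of_forall fun x => ?_)
    obtain ⟨s, hs, hxs⟩ := mem_iUnion₂.mp (hcov (mem_univ x))
    refine mem_iUnion.mpr ⟨Fin.cast hcard (C.equivFin ⟨s, hs⟩), subset_closure ?_⟩
    simpa using hxs
  · exact dist_le_of_mem_closure (hdiam _ (Subtype.prop _)) (disjointed_subset t i hx)
      (disjointed_subset t i hy)

end Partition

section Coupling

variable {X Y : Type*} [MeasurableSpace X] [MeasurableSpace Y]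

noncomputable def indepCoupling (α : Measure X) (β : Measure Y) : Measure (X × Y) :=
  (α univ)⁻¹ • α.prod β

theorem inv_measure_univ_mul_smul_self (α : Measure X) [IsFiniteMeasure α] :
    ((α univ)⁻¹ * α univ) • α = α := by
  rcases eq_or_ne (α univ) 0 with h0 | h0
  · rw [Measure.measure_univ_eq_zero.mp h0, smul_zero]
  · rw [ENNReal.inv_mul_cancel h0 (measure_ne_top _ _), one_smul]

variable {α : Measure X} {β : Measure Y}

theorem map_fst_indepCoupling [IsFiniteMeasure α] [IsFiniteMeasure β] (h : α univ = β univ) :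
    (indepCoupling α β).map Prod.fst = α := by
  rw [indepCoupling, Measure.map_smul, Measure.map_fst_prod, ← h, smul_smul,
    inv_measure_univ_mul_smul_self]

theorem map_snd_indepCoupling [IsFiniteMeasure β] (h : α univ = β univ) :
    (indepCoupling α β).map Prod.snd = β := by
  rw [indepCoupling, Measure.map_smul, Measure.map_snd_prod, h, smul_smul,
    inv_measure_univ_mul_smul_self]

theorem lintegral_indepCoupling_le [IsFiniteMeasure β] {f : X × Y → ℝ≥0∞} {K : ℝ≥0∞}
    (h : α univ = β univ) (hf : ∀ᵐ p ∂α.prod β, f p ≤ K) :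
    ∫⁻ p, f p ∂indepCoupling α β ≤ K * α univ :=
  calc ∫⁻ p, f p ∂indepCoupling α β ≤ (α univ)⁻¹ * (K * (α univ * α univ)) := by
        rw [indepCoupling, lintegral_smul_measure]
        refine mul_le_mul_right ?_ _
        calc ∫⁻ p, f p ∂α.prod β ≤ ∫⁻ _, K ∂α.prod β := lintegral_mono_ae hf
          _ = K * (α univ * α univ) := by
            rw [lintegral_const, ← univ_prod_univ, Measure.prod_prod, ← h]
    _ = K * ((α univ)⁻¹ * α univ) * α univ := by ring
    _ ≤ K * 1 * α univ := by gcongr; exact ENNReal.inv_mul_le_one _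
    _ = K * α univ := by rw [mul_one]

end Coupling

section Cells

variable {X : Type*} [MeasurableSpace X]

theorem smul_div_add_smul_one_sub_div (ρ : Measure X) {w : ℝ≥0∞} (hw : w ≤ ρ univ) :
    (w / ρ univ) • ρ + (1 - w / ρ univ) • ρ = ρ := by
  rw [← add_smul, add_tsub_cancel_of_le (ENNReal.div_le_of_le_mul (by rwa [one_mul])), one_smul]

theorem smul_div_measure_univ (ρ : Measure X) [IsFiniteMeasure ρ] {w : ℝ≥0∞}
    (hw : w ≤ ρ univ) : ((w / ρ univ) • ρ) univ = w := by
  rw [Measure.smul_apply, smul_eq_mul]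
  rcases eq_or_ne (ρ univ) 0 with h0 | h0
  · rw [h0, mul_zero, nonpos_iff_eq_zero.mp (hw.trans_eq h0)]
  · exact ENNReal.div_mul_cancel h0 (measure_ne_top _ _)

theorem smul_one_sub_div_measure_univ (ρ : Measure X) [IsFiniteMeasure ρ] {w : ℝ≥0∞}
    (hw : w ≤ ρ univ) : ((1 - w / ρ univ) • ρ) univ = ρ univ - w := by
  refine ENNReal.eq_sub_of_add_eq (ne_top_of_le_ne_top (measure_ne_top _ _) hw) ?_
  conv_rhs => rw [← smul_div_add_smul_one_sub_div ρ hw]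
  rw [Measure.add_apply, smul_div_measure_univ ρ hw, add_comm]

variable {ι : Type*} {μ : Measure X} {B : ι → Set X} {m : ι → ℝ≥0∞}

theorem sum_restrict_of_partition [Fintype ι] (hB : ∀ i, MeasurableSet (B i))
    (hdisj : Pairwise (Disjoint on B)) (hcover : ⋃ i, B i = univ) :
    ∑ i, μ.restrict (B i) = μ := by
  rw [← Measure.sum_fintype, ← Measure.restrict_iUnion hdisj hB, hcover, Measure.restrict_univ]

variable (μ B m) in
noncomputable def cellPart (i : ι) : Measure X :=
  (m i / μ (B i)) • μ.restrict (B i)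

variable (μ B m) in
noncomputable def cellRest [Fintype ι] : Measure X :=
  ∑ i, (1 - m i / μ (B i)) • μ.restrict (B i)

theorem cellPart_apply_univ [IsFiniteMeasure μ] {i : ι} (hm : m i ≤ μ (B i)) :
    cellPart μ B m i univ = m i := by
  rw [cellPart, ← Measure.restrict_apply_univ (B i)]
  exact smul_div_measure_univ _ (by rwa [Measure.restrict_apply_univ])

theorem ae_mem_cellPart {i : ι} (hB : MeasurableSet (B i)) : ∀ᵐ x ∂cellPart μ B m i, x ∈ B i :=
  Measure.ae_smul_measure (ae_restrict_mem hB) _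

theorem cellRest_apply_univ [Fintype ι] [IsFiniteMeasure μ] (hm : ∀ i, m i ≤ μ (B i)) :
    cellRest μ B m univ = ∑ i, (μ (B i) - m i) := by
  rw [cellRest, Measure.finsetSum_apply]
  refine Finset.sum_congr rfl fun i _ => ?_
  rw [← Measure.restrict_apply_univ (B i)]
  exact smul_one_sub_div_measure_univ _ (by rw [Measure.restrict_apply_univ]; exact hm i)

theorem sum_cellPart_add_cellRest [Fintype ι] (hB : ∀ i, MeasurableSet (B i))
    (hdisj : Pairwise (Disjoint on B)) (hcover : ⋃ i, B i = univ)
    (hm : ∀ i, m i ≤ μ (B i)) : ∑ i, cellPart μ B m i + cellRest μ B m = μ := by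
  rw [cellRest, ← Finset.sum_add_distrib]
  refine (Finset.sum_congr rfl fun i _ => ?_).trans (sum_restrict_of_partition hB hdisj hcover)
  rw [cellPart, ← Measure.restrict_apply_univ (B i)]
  exact smul_div_add_smul_one_sub_div _ (by rw [Measure.restrict_apply_univ]; exact hm i)

theorem sum_add_cellRest_apply_univ [Fintype ι] [IsFiniteMeasure μ]
    (hB : ∀ i, MeasurableSet (B i)) (hdisj : Pairwise (Disjoint on B))
    (hcover : ⋃ i, B i = univ) (hm : ∀ i, m i ≤ μ (B i)) :
    ∑ i, m i + cellRest μ B m univ = μ univ := by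
  conv_rhs => rw [← sum_cellPart_add_cellRest hB hdisj hcover hm]
  simp only [Measure.add_apply, Measure.finsetSum_apply, cellPart_apply_univ (hm _)]

end Cells

section Wasserstein

variable {X : Type*} [MetricSpace X] [MeasurableSpace X]

-- `|∫ f| ≤ ∫⁻ |f|` holds without measurability, so `dist` need not be measurable on `X × X`.
theorem wasserstein1_le_of_coupling {μ ν : Measure X} [IsProbabilityMeasure μ]
    (π : Measure (X × X)) (hfst : π.map Prod.fst = μ) (hsnd : π.map Prod.snd = ν) {c : ℝ}
    (hc : 0 ≤ c) (hcost : ∫⁻ p, ENNReal.ofReal (dist p.1 p.2) ∂π ≤ ENNReal.ofReal c) :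
    wasserstein1 μ ν ≤ c := by
  have hπ : IsProbabilityMeasure π := ⟨by
    rw [← Set.preimage_univ (f := Prod.fst), ← Measure.map_apply measurable_fst .univ, hfst,
      measure_univ]⟩
  rw [wasserstein1]
  refine le_trans (csInf_le ?_ ⟨π, hπ, hfst, hsnd, rfl⟩) ?_
  · refine ⟨0, ?_⟩
    rintro _ ⟨π', -, -, -, rfl⟩
    exact integral_nonneg fun p => dist_nonneg
  · calc ∫ p, dist p.1 p.2 ∂π ≤ ‖∫ p, dist p.1 p.2 ∂π‖ := Real.le_norm_self _
      _ ≤ (∫⁻ p, ENNReal.ofReal ‖dist p.1 p.2‖ ∂π).toReal := norm_integral_le_lintegral_norm _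
      _ ≤ c := ENNReal.toReal_le_of_le_ofReal hc (by simpa only [Real.norm_of_nonneg dist_nonneg])

theorem wasserstein1_le_of_decomposition {ι : Type*} [Fintype ι] {μ ν : Measure X}
    [IsProbabilityMeasure μ] {α β : ι → Measure X} {E F : Measure X}
    (hμ : ∑ i, α i + E = μ) (hν : ∑ i, β i + F = ν) (hαβ : ∀ i, α i univ = β i univ)
    (hEF : E univ = F univ) {d D c : ℝ} (hd : 0 ≤ d) (hc : 0 ≤ c)
    (hcell : ∀ i, ∀ᵐ p ∂(α i).prod (β i), dist p.1 p.2 ≤ d) (hD : ∀ x y : X, dist x y ≤ D)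
    (hE : E univ ≤ ENNReal.ofReal c) :
    wasserstein1 μ ν ≤ d + c * D := by
  have hD0 : 0 ≤ D := by
    obtain ⟨x⟩ := nonempty_of_isProbabilityMeasure μ
    simpa using hD x x
  have hmass : ∑ i, α i univ + E univ = 1 := by
    rw [← measure_univ (μ := μ), ← hμ, Measure.add_apply, Measure.finsetSum_apply]
  have hα_fin : ∀ i, α i univ < ⊤ := fun i =>
    ((Finset.single_le_sum (fun j _ => zero_le) (Finset.mem_univ i)).trans
      (le_self_add.trans_eq hmass)).trans_lt ENNReal.one_lt_top
  have : ∀ i, IsFiniteMeasure (α i) := fun i => ⟨hα_fin i⟩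
  have : ∀ i, IsFiniteMeasure (β i) := fun i => ⟨hαβ i ▸ hα_fin i⟩
  have hE_fin : E univ < ⊤ := (le_add_self.trans_eq hmass).trans_lt ENNReal.one_lt_top
  have : IsFiniteMeasure E := ⟨hE_fin⟩
  have : IsFiniteMeasure F := ⟨hEF ▸ hE_fin⟩
  refine wasserstein1_le_of_coupling (∑ i, indepCoupling (α i) (β i) + indepCoupling E F)
    ?_ ?_ (by positivity) ?_
  · rw [Measure.map_add _ _ measurable_fst, Measure.map_finset_sum measurable_fst.aemeasurable,
      map_fst_indepCoupling hEF, ← hμ]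
    exact congrArg (· + E) (Finset.sum_congr rfl fun i _ => map_fst_indepCoupling (hαβ i))
  · rw [Measure.map_add _ _ measurable_snd, Measure.map_finset_sum measurable_snd.aemeasurable,
      map_snd_indepCoupling hEF, ← hν]
    exact congrArg (· + F) (Finset.sum_congr rfl fun i _ => map_snd_indepCoupling (hαβ i))
  · rw [lintegral_add_measure, lintegral_finsetSum_measure]
    calc _ ≤ ∑ i, ENNReal.ofReal d * α i univ + ENNReal.ofReal D * E univ := by
          gcongr with i
          · exact lintegral_indepCoupling_le (hαβ i)
              ((hcell i).mono fun p hp => ENNReal.ofReal_le_ofReal hp)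
          · exact lintegral_indepCoupling_le hEF
              (ae_of_all _ fun p => ENNReal.ofReal_le_ofReal (hD _ _))
      _ ≤ ENNReal.ofReal d * 1 + ENNReal.ofReal D * ENNReal.ofReal c := by
          rw [← Finset.mul_sum]
          gcongr
          exact le_self_add.trans_eq hmass
      _ = ENNReal.ofReal (d + c * D) := by
          rw [mul_one, ← ENNReal.ofReal_mul hD0, ← ENNReal.ofReal_add hd (by positivity), mul_comm]

theorem wasserstein1_le_of_partition {ι : Type*} [Fintype ι] {B : ι → Set X}
    (hB : ∀ i, MeasurableSet (B i)) (hdisj : Pairwise (Disjoint on B))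
    (hcover : ⋃ i, B i = univ) {d D : ℝ} (hd : 0 ≤ d)
    (hdiam : ∀ i, ∀ x ∈ B i, ∀ y ∈ B i, dist x y ≤ d) (hD : ∀ x y : X, dist x y ≤ D)
    (μ ν : Measure X) [IsProbabilityMeasure μ] [IsProbabilityMeasure ν] {ε : ℝ} (hε : 0 ≤ ε)
    (hclose : ∀ i, μ (B i) ≤ ν (B i) + ENNReal.ofReal ε) :
    wasserstein1 μ ν ≤ d + Fintype.card ι * ε * D := by
  set m : ι → ℝ≥0∞ := fun i => min (μ (B i)) (ν (B i))
  have hmμ : ∀ i, m i ≤ μ (B i) := fun i => min_le_left _ _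
  have hmν : ∀ i, m i ≤ ν (B i) := fun i => min_le_right _ _
  have hmassμ := sum_add_cellRest_apply_univ hB hdisj hcover hmμ
  have hmassν := sum_add_cellRest_apply_univ hB hdisj hcover hmν
  have hrest_eq : cellRest μ B m univ = cellRest ν B m univ := by
    refine (ENNReal.add_right_inj ?_).mp (by rw [hmassμ, hmassν, measure_univ, measure_univ])
    exact ne_top_of_le_ne_top (measure_ne_top μ univ) (hmassμ ▸ le_self_add)
  have hrest_le : cellRest μ B m univ ≤ ENNReal.ofReal (Fintype.card ι * ε) :=
    calc cellRest μ B m univ = ∑ i, (μ (B i) - m i) := cellRest_apply_univ hmμ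
      _ ≤ ∑ _i : ι, ENNReal.ofReal ε := Finset.sum_le_sum fun i _ => by
          rw [tsub_le_iff_left, ← min_add_add_right]
          exact le_min le_self_add (hclose i)
      _ = ENNReal.ofReal (Fintype.card ι * ε) := by
          rw [ENNReal.ofReal_mul (by positivity), ENNReal.ofReal_natCast]; simp
  refine (wasserstein1_le_of_decomposition (sum_cellPart_add_cellRest hB hdisj hcover hmμ)
    (sum_cellPart_add_cellRest hB hdisj hcover hmν)
    (fun i => (cellPart_apply_univ (hmμ i)).trans (cellPart_apply_univ (hmν i)).symm)
    hrest_eq hd (by positivity) (fun i => ?_) hD hrest_le).trans_eq (by ring)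
  filter_upwards [Measure.quasiMeasurePreserving_fst.ae (ae_mem_cellPart (hB i)),
    Measure.quasiMeasurePreserving_snd.ae (ae_mem_cellPart (hB i))] with p hp1 hp2
  exact hdiam i _ hp1 _ hp2

end Wasserstein

section WassersteinCovering

variable {X : Type*} [MetricSpace X] [MeasurableSpace X]

theorem NNReal.le_add_of_floor_div_eq {a b η : ℝ≥0} (hη : 0 < η) (h : ⌊a / η⌋₊ = ⌊b / η⌋₊) :
    a ≤ b + η := by
  have hlt : a / η < b / η + 1 :=
    (Nat.lt_floor_add_one (a / η)).trans_le (by rw [h]; gcongr; exact Nat.floor_le zero_le)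
  rw [div_lt_iff₀ hη, add_mul, div_mul_cancel₀ _ hη.ne', one_mul] at hlt
  exact hlt.le

theorem coveringNumber_wasserstein1_le_of_partition {ι : Type*} [Fintype ι] {B : ι → Set X}
    (hB : ∀ i, MeasurableSet (B i)) (hdisj : Pairwise (Disjoint on B))
    (hcover : ⋃ i, B i = univ) {d D : ℝ} (hd : 0 ≤ d)
    (hdiam : ∀ i, ∀ x ∈ B i, ∀ y ∈ B i, dist x y ≤ d) (hD : ∀ x y : X, dist x y ≤ D)
    {η : ℝ≥0} (hη : 0 < η) :
    coveringNumber (fun μ ν : ProbabilityMeasure X => wasserstein1 (μ : Measure X) ν) univ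
      (d + Fintype.card ι * η * D) ≤ ((⌊η⁻¹⌋₊ + 1) ^ Fintype.card ι : ℕ) := by
  classical
  refine (coveringNumber_le_of_fibers (fun μ i => ⌊μ (B i) / η⌋₊)
    (Fintype.piFinset fun _ => Finset.range (⌊η⁻¹⌋₊ + 1)) ?_ ?_).trans (by simp)
  · intro μ _
    simp only [Fintype.mem_piFinset, Finset.mem_range, Nat.lt_succ_iff]
    intro i
    rw [← one_div]
    exact Nat.floor_le_floor (div_le_div_of_nonneg_right (ProbabilityMeasure.apply_le_one μ _)
      zero_le)
  · intro μ _ ν _ h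
    refine wasserstein1_le_of_partition hB hdisj hcover hd hdiam hD _ _ η.coe_nonneg fun i => ?_
    rw [← ProbabilityMeasure.ennreal_coeFn_eq_coeFn_toMeasure,
      ← ProbabilityMeasure.ennreal_coeFn_eq_coeFn_toMeasure, ENNReal.ofReal_coe_nnreal]
    exact_mod_cast NNReal.le_add_of_floor_div_eq hη (congrFun h i)

theorem exists_coveringNumber_wasserstein1_le [OpensMeasurableSpace X] {D δ : ℝ}
    (hD : ∀ x y : X, dist x y ≤ D) (hD0 : 0 < D) (hδ : 0 < δ) {n : ℕ}
    (hn : coveringNumber (fun x y : X => dist x y) univ (δ / 2) = n) :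
    ∃ m : ℕ, coveringNumber (fun μ ν : ProbabilityMeasure X => wasserstein1 (μ : Measure X) ν)
      univ δ = m ∧ (m : ℝ) ≤ (2 * D * (n + 1) / δ + 1) ^ n := by
  obtain ⟨B, hB, hdisj, hcover, hdiam⟩ := exists_measurable_partition_of_coveringNumber_eq hn
  let η : ℝ≥0 := ⟨δ / (2 * D * (n + 1)), by positivity⟩
  have hη : 0 < η := by rw [← NNReal.coe_pos]; change 0 < δ / (2 * D * (n + 1)); positivity
  have hrad : δ / 2 + Fintype.card (Fin n) * η * D ≤ δ := by
    have hfrac : (n : ℝ) / (n + 1) ≤ 1 := div_le_one_of_le₀ (by linarith) (by positivity)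
    calc δ / 2 + (Fintype.card (Fin n) : ℝ) * (δ / (2 * D * (n + 1))) * D
        = δ / 2 + δ / 2 * (n / (n + 1)) := by rw [Fintype.card_fin]; field_simp
      _ ≤ δ / 2 + δ / 2 * 1 := by gcongr
      _ = δ := by ring
  have hle := (coveringNumber_antitone hrad).trans
    (coveringNumber_wasserstein1_le_of_partition hB hdisj hcover (by positivity) hdiam hD hη)
  rw [Fintype.card_fin] at hle
  refine ⟨_, (ENat.natCast_toNat (ne_top_of_le_ne_top (ENat.natCast_ne_top _) hle)).symm, ?_⟩
  have hfloor : (⌊η⁻¹⌋₊ : ℝ) ≤ 2 * D * (n + 1) / δ := by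
    have h := NNReal.coe_le_coe.mpr (Nat.floor_le (zero_le : (0 : ℝ≥0) ≤ η⁻¹))
    rwa [NNReal.coe_natCast, NNReal.coe_inv, show (η : ℝ) = δ / (2 * D * (n + 1)) from rfl,
      inv_div] at h
  calc _ ≤ (((⌊η⁻¹⌋₊ + 1) ^ n : ℕ) : ℝ) := by
        exact_mod_cast (ENat.toNat_le_toNat hle (ENat.natCast_ne_top _)).trans_eq
          (ENat.toNat_natCast _)
    _ ≤ (2 * D * (n + 1) / δ + 1) ^ n := by push_cast; gcongr

end WassersteinCovering

section Asymptotics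

open Real

theorem log_log_natCast_le {n m : ℕ} {C ℓ t : ℝ} (hC : 0 ≤ C) (ht : 1 ≤ t)
    (hn : log n ≤ ℓ) (hm : (m : ℝ) ≤ (C * (n + 1) * exp t + 1) ^ n) :
    log (log m) ≤ ℓ + log (log (2 * C + 1) + ℓ + t) := by
  have hℓ : 0 ≤ ℓ := (log_natCast_nonneg n).trans hn
  have hA : 1 ≤ log (2 * C + 1) + ℓ + t := by
    have := log_nonneg (show (1 : ℝ) ≤ 2 * C + 1 by linarith)
    linarith
  have hn_exp : (n : ℝ) ≤ exp ℓ := by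
    rcases n.eq_zero_or_pos with rfl | hpos
    · simpa using (exp_pos ℓ).le
    · exact (log_le_iff_le_exp (by exact_mod_cast hpos)).mp hn
  have hbase : C * (n + 1) * exp t + 1 ≤ (2 * C + 1) * exp (ℓ + t) := by
    have h1 : 1 ≤ exp ℓ := one_le_exp hℓ
    have h2 : 1 ≤ exp t := one_le_exp (by linarith)
    rw [exp_add]
    nlinarith [mul_le_mul_of_nonneg_left (show (n : ℝ) + 1 ≤ 2 * exp ℓ by linarith) hC,
      mul_le_mul h1 h2 zero_le_one (exp_pos ℓ).le]
  have hlog_m : log m ≤ exp ℓ * (log (2 * C + 1) + ℓ + t) := by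
    rcases m.eq_zero_or_pos with rfl | hpos
    · simp only [CharP.cast_eq_zero, log_zero]; positivity
    calc log m ≤ log (((2 * C + 1) * exp (ℓ + t)) ^ n) :=
          log_le_log (by exact_mod_cast hpos) (hm.trans (by gcongr))
      _ = n * (log (2 * C + 1) + ℓ + t) := by
          rw [log_pow, log_mul (by positivity) (exp_pos _).ne', log_exp, add_assoc]
      _ ≤ exp ℓ * (log (2 * C + 1) + ℓ + t) := by gcongr
  rcases (log_natCast_nonneg m).eq_or_lt with h0 | hpos
  · rw [← h0, log_zero]
    have := log_nonneg hA
    linarith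
  · calc log (log m) ≤ log (exp ℓ * (log (2 * C + 1) + ℓ + t)) := log_le_log hpos hlog_m
      _ = ℓ + log (log (2 * C + 1) + ℓ + t) := by
          rw [log_mul (exp_pos _).ne' (by positivity), log_exp]

theorem eventually_add_log_le_mul_atTop (a b c : ℝ) (hb : 0 < b) {ε : ℝ} (hε : 0 < ε) :
    ∀ᶠ t in atTop, c + log (a + b * t) ≤ ε * t := by
  have hlin : Tendsto (fun t => a + b * t) atTop atTop :=
    tendsto_atTop_add_const_left _ a (tendsto_id.const_mul_atTop hb)
  have hO : (fun t => a + b * t) =O[atTop] (fun t : ℝ => t) :=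
    ((Asymptotics.isLittleO_const_id_atTop a).isBigO).add
      (Asymptotics.isBigO_refl _ _ |>.const_mul_left b)
  have ho : (fun t => c + log (a + b * t)) =o[atTop] (fun t : ℝ => t) :=
    (Asymptotics.isLittleO_const_id_atTop c).add
      ((isLittleO_log_id_atTop.comp_tendsto hlin).trans_isBigO hO)
  filter_upwards [ho.bound hε, eventually_ge_atTop 0] with t h ht
  simpa [abs_of_nonneg ht] using (le_abs_self _).trans h

theorem tendsto_log_one_div_nhdsGT_zero :
    Tendsto (fun δ : ℝ => log (1 / δ)) (nhdsWithin 0 (Ioi 0)) atTop := by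
  simpa only [one_div, Function.comp_def] using tendsto_log_atTop.comp tendsto_inv_nhdsGT_zero

theorem eventually_log_log_le {k ε C : ℝ} (hk : 0 ≤ k) (hε : 0 < ε) (hC : 0 ≤ C) :
    ∀ᶠ δ in nhdsWithin 0 (Ioi 0), ∀ n m : ℕ, log n ≤ k * log (2 / δ) →
      (m : ℝ) ≤ (C * (n + 1) / δ + 1) ^ n → log (log m) ≤ (k + ε) * log (1 / δ) := by
  -- the constants are those of `log_log_natCast_le` for `t = log (1/δ)`, `ℓ = k (log 2 + t)`
  filter_upwards [tendsto_log_one_div_nhdsGT_zero.eventually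
      (eventually_add_log_le_mul_atTop (log (2 * C + 1) + k * log 2) (k + 1) (k * log 2)
        (by linarith) hε),
    tendsto_log_one_div_nhdsGT_zero.eventually (eventually_ge_atTop 1), self_mem_nhdsWithin]
    with δ hsmall ht (hδ : 0 < δ) n m hn hm
  have h2δ : log (2 / δ) = log 2 + log (1 / δ) := by
    rw [← log_mul two_ne_zero (by positivity), mul_one_div]
  rw [h2δ] at hn
  have hm' : (m : ℝ) ≤ (C * (n + 1) * exp (log (1 / δ)) + 1) ^ n := by
    rwa [exp_log (by positivity), mul_one_div]
  calc log (log m) ≤ k * (log 2 + log (1 / δ)) +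
        log (log (2 * C + 1) + k * (log 2 + log (1 / δ)) + log (1 / δ)) :=
        log_log_natCast_le hC ht hn hm'
    _ ≤ (k + ε) * log (1 / δ) := by
        convert add_le_add_left hsmall (k * log (1 / δ)) using 1 <;> ring_nf

end Asymptotics

/-- Upper bound: if `(X,d)` has finite diameter and covering dimension `κ < ∞`, then
the log-covering dimension of the space of probability measures on `X` with the
Wasserstein-1 metric is at most `κ`. -/
theorem stmt_13 {X : Type*} [MetricSpace X] [MeasurableSpace X] [BorelSpace X]
    (hbdd : ∃ D : ℝ, ∀ x y : X, dist x y ≤ D) (κ : ℝ)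
    (hκ : covDim (fun x y : X => dist x y) Set.univ = (κ : EReal)) :
    logCovDim
        (fun μ ν : ProbabilityMeasure X => wasserstein1 (μ : Measure X) (ν : Measure X))
        Set.univ ≤ (κ : EReal) := by
  obtain ⟨D, hD⟩ := hbdd
  have hD' : ∀ x y : X, dist x y ≤ max D 1 := fun x y => (hD x y).trans (le_max_left _ _)
  have hκ0 : 0 ≤ κ := EReal.coe_nonneg.mp (hκ ▸ covDim_nonneg _ _)
  refine logCovDim_le_of_forall_eventually fun ε hε => ?_
  have hcovX := eventually_nhdsGT_zero_mul_left (inv_pos.mpr two_pos)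
    (eventually_coveringNumber_lt_of_covDim_lt
      (hκ ▸ EReal.coe_lt_coe_iff.mpr (lt_add_of_pos_right κ (half_pos hε))))
  filter_upwards [hcovX, self_mem_nhdsWithin, eventually_log_log_le
      (add_nonneg hκ0 (half_pos hε).le) (half_pos hε) (by positivity : 0 ≤ 2 * max D 1)]
    with δ ⟨n, hn, hlog_n⟩ (hδ : 0 < δ) hlog_log
  rw [inv_mul_eq_div] at hn hlog_n
  rw [one_div_div] at hlog_n
  obtain ⟨m, hm, hm_le⟩ := exists_coveringNumber_wasserstein1_le hD' (by positivity) hδ hn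
  exact ⟨m, hm, (hlog_log n m hlog_n.le hm_le).trans_eq (by ring)⟩
end

section
/- Let p, q be probability measures on a finite measurable space with KL-divergence κ = KL(p;q). Then for any event E, q(E) ≥ p(E)·exp(−(κ + 1/e)/p(E)) (with the convention that the bound holds trivially when p(E) = 0). -/
/-!
Write `a = p(E)` and `b = q(E)`. The log-sum inequality bounds the part of `κ` over `E` below by
`a log (a / b)`, and the pointwise bound `p log (p / q) ≥ -q / e` (that is, `t log t ≥ -1/e` at
`t = p / q`) bounds the part over the complement below by `-q(Eᶜ) / e ≥ -1/e`. Hence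
`a log (a / b) ≤ κ + 1/e`, and exponentiating gives the claim.
-/

open Real Finset

/-- Gibbs' inequality for a single term: the tangent line of `t ↦ t log t` at `c`, scaled by `q`. -/
lemma mul_log_add_sub_mul_le_mul_log_div {p q c : ℝ} (hp : 0 ≤ p) (hq : 0 ≤ q)
    (hac : q = 0 → p = 0) (hc : 0 < c) :
    p * log c + p - q * c ≤ p * log (p / q) := by
  rcases hp.eq_or_lt with rfl | hp
  · simpa using mul_nonneg hq hc.le
  have hq : 0 < q := hq.lt_of_ne fun h => hp.ne' (hac h.symm)
  have hx := self_sub_one_le_mul_log (x := p / (q * c)) (by positivity)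
  have hscaled := mul_le_mul_of_nonneg_left hx (by positivity : 0 ≤ q * c)
  have hqcx : q * c * (p / (q * c)) = p := by field_simp
  rw [mul_sub, ← mul_assoc, hqcx, mul_one, div_mul_eq_div_div,
    log_div (by positivity) hc.ne'] at hscaled
  linarith

lemma Finset.sum_pos_of_absolutelyContinuous {α : Type*} {s : Finset α} {p q : α → ℝ}
    (hq : ∀ x ∈ s, 0 ≤ q x) (hac : ∀ x ∈ s, q x = 0 → p x = 0)
    (hpos : 0 < ∑ x ∈ s, p x) : 0 < ∑ x ∈ s, q x := by
  refine (sum_nonneg hq).lt_of_ne fun h => hpos.ne' (sum_eq_zero fun x hx => hac x hx ?_)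
  exact (sum_eq_zero_iff_of_nonneg hq).mp h.symm x hx

lemma Finset.sum_mul_log_div_sum_le {α : Type*} {s : Finset α} {p q : α → ℝ}
    (hp : ∀ x ∈ s, 0 ≤ p x) (hq : ∀ x ∈ s, 0 ≤ q x) (hac : ∀ x ∈ s, q x = 0 → p x = 0)
    (hpos : 0 < ∑ x ∈ s, p x) :
    (∑ x ∈ s, p x) * log ((∑ x ∈ s, p x) / ∑ x ∈ s, q x)
      ≤ ∑ x ∈ s, p x * log (p x / q x) := by
  set a := ∑ x ∈ s, p x
  set b := ∑ x ∈ s, q x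
  have hb : 0 < b := sum_pos_of_absolutelyContinuous hq hac hpos
  have hterms : ∑ x ∈ s, (p x * log (a / b) + p x - q x * (a / b))
      ≤ ∑ x ∈ s, p x * log (p x / q x) :=
    sum_le_sum fun x hx =>
      mul_log_add_sub_mul_le_mul_log_div (hp x hx) (hq x hx) (hac x hx) (by positivity)
  rw [sum_sub_distrib, sum_add_distrib, ← sum_mul, ← sum_mul,
    mul_div_cancel₀ a hb.ne'] at hterms
  linarith

lemma Finset.neg_exp_neg_one_mul_sum_le_sum_mul_log_div {α : Type*} {s : Finset α}
    {p q : α → ℝ} (hp : ∀ x ∈ s, 0 ≤ p x) (hq : ∀ x ∈ s, 0 ≤ q x)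
    (hac : ∀ x ∈ s, q x = 0 → p x = 0) :
    -(exp (-1) * ∑ x ∈ s, q x) ≤ ∑ x ∈ s, p x * log (p x / q x) := by
  rw [mul_sum, ← sum_neg_distrib]
  refine sum_le_sum fun x hx => ?_
  have := mul_log_add_sub_mul_le_mul_log_div (hp x hx) (hq x hx) (hac x hx) (exp_pos (-1))
  rw [log_exp] at this
  linarith

lemma mul_exp_neg_div_le_of_mul_log_div_le {a b K : ℝ} (ha : 0 < a) (hb : 0 < b)
    (h : a * log (a / b) ≤ K) : a * exp (-(K / a)) ≤ b := by
  have hlog : log (a / b) ≤ K / a := (le_div_iff₀ ha).mpr (by linarith)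
  calc a * exp (-(K / a)) ≤ a * exp (log (b / a)) := by
        gcongr
        rw [← inv_div a b, log_inv]
        linarith
    _ = b := by rw [exp_log (by positivity), mul_div_cancel₀ b ha.ne']

theorem stmt_16_general {α : Type*} [Fintype α] (p q : α → ℝ)
    (hp : ∀ x, 0 ≤ p x) (hq : ∀ x, 0 ≤ q x)
    (hq1 : ∑ x, q x = 1)
    (hac : ∀ x, q x = 0 → p x = 0)
    (κ : ℝ) (hκ : κ = ∑ x, p x * Real.log (p x / q x))
    (E : Finset α) :
    (∑ x ∈ E, p x) * Real.exp (-((κ + 1 / Real.exp 1) / (∑ x ∈ E, p x)))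
      ≤ ∑ x ∈ E, q x := by
  classical
  rcases (sum_nonneg fun x _ => hp x : 0 ≤ ∑ x ∈ E, p x).eq_or_lt with hpE | hpE
  · simpa [← hpE] using sum_nonneg fun x _ => hq x
  have hqE := sum_pos_of_absolutelyContinuous (fun x _ => hq x) (fun x _ => hac x) hpE
  have hκE := sum_mul_log_div_sum_le (fun x _ => hp x) (fun x _ => hq x) (fun x _ => hac x) hpE
  have hκEc := neg_exp_neg_one_mul_sum_le_sum_mul_log_div (s := Eᶜ)
    (fun x _ => hp x) (fun x _ => hq x) (fun x _ => hac x)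
  have hqEc : ∑ x ∈ Eᶜ, q x ≤ 1 := by
    rw [← hq1, ← sum_add_sum_compl E q]
    linarith
  have hqEc' := mul_le_of_le_one_right (exp_pos (-1)).le hqEc
  refine mul_exp_neg_div_le_of_mul_log_div_le hpE hqE ?_
  rw [hκ, ← sum_add_sum_compl E, one_div, ← exp_neg]
  linarith

/-- Let `p, q` be probability measures on a finite space, absolutely continuous so the
KL divergence `κ = Σ_x p(x) log(p(x)/q(x))` is finite. Then for any event `E`,
`q(E) ≥ p(E) · exp(−(κ + 1/e)/p(E))` (trivially when `p(E) = 0`). -/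
theorem stmt_16 {α : Type*} [Fintype α] (p q : α → ℝ)
    (hp : ∀ x, 0 ≤ p x) (hq : ∀ x, 0 ≤ q x)
    (hp1 : ∑ x, p x = 1) (hq1 : ∑ x, q x = 1)
    (hac : ∀ x, q x = 0 → p x = 0)
    (κ : ℝ) (hκ : κ = ∑ x, p x * Real.log (p x / q x))
    (E : Finset α) :
    (∑ x ∈ E, p x) * Real.exp (-((κ + 1 / Real.exp 1) / (∑ x ∈ E, p x)))
      ≤ ∑ x ∈ E, q x :=
  stmt_16_general p q hp hq hq1 hac κ hκ E
end

section
/- Let (X,d) be a metric space containing a perfect subspace. Then (X,d) contains a ball-tree: a complete infinite binary tree whose nodes are pairs (x,r) with x ∈ X and r ∈ (0,1], such that (i) if (x,r) is the parent of (x',r') then d(x,x') + r' < r/2, and (ii) if (x,r_x) and (y,r_y) are siblings then r_x + r_y < d(x,y). -/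
open Metric
open scoped Classical

section aux

variable {X : Type*} [MetricSpace X] (Y : Set X)
  (hperf : ∀ y ∈ Y, ∀ ρ : ℝ, 0 < ρ → ∃ z ∈ Y, z ≠ y ∧ dist z y < ρ)

/-- Pick a point of `Y` distinct from `a` within distance `ρ`. -/
noncomputable def pickAux (a : X) (ρ : ℝ) : X :=
  if h : a ∈ Y ∧ 0 < ρ then (hperf a h.1 ρ h.2).choose else a

lemma pickAux_spec {a : X} {ρ : ℝ} (ha : a ∈ Y) (hρ : 0 < ρ) :
    pickAux Y hperf a ρ ∈ Y ∧ pickAux Y hperf a ρ ≠ a ∧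
      dist (pickAux Y hperf a ρ) a < ρ := by
  rw [pickAux, dif_pos ⟨ha, hρ⟩]
  exact (hperf a ha ρ hρ).choose_spec

/-- Child of a node `(a, ρ)`. -/
noncomputable def childAux (b : Bool) (p : X × ℝ) : X × ℝ :=
  let w := pickAux Y hperf p.1 (p.2 / 8)
  ((if b then p.1 else w), min (dist p.1 w / 3) (p.2 / 8))

/-- The tree, indexed by reversed binary strings. -/
noncomputable def treeAux (y0 : X) : List Bool → X × ℝ
  | [] => (y0, 1)
  | b :: s => childAux Y hperf b (treeAux y0 s)

lemma treeAux_inv (y0 : X) (hy0 : y0 ∈ Y) (s : List Bool) :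
    (treeAux Y hperf y0 s).1 ∈ Y ∧ 0 < (treeAux Y hperf y0 s).2 ∧
      (treeAux Y hperf y0 s).2 ≤ 1 := by
  induction s with
  | nil => exact ⟨hy0, one_pos, le_refl 1⟩
  | cons b s ih =>
    obtain ⟨hm, hpos, hle⟩ := ih
    set p := treeAux Y hperf y0 s
    obtain ⟨hw1, hw2, hw3⟩ := pickAux_spec Y hperf hm (by linarith : (0:ℝ) < p.2 / 8)
    set w := pickAux Y hperf p.1 (p.2 / 8)
    have hd : 0 < dist p.1 w := by
      rw [dist_comm]; exact dist_pos.mpr hw2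
    have hr : (treeAux Y hperf y0 (b :: s)).2 = min (dist p.1 w / 3) (p.2 / 8) := rfl
    refine ⟨?_, ?_, ?_⟩
    · show (childAux Y hperf b p).1 ∈ Y
      cases b <;> simpa [childAux] using (by first | exact hw1 | exact hm)
    · rw [hr]; exact lt_min (by linarith) (by linarith)
    · rw [hr]
      calc min (dist p.1 w / 3) (p.2 / 8) ≤ p.2 / 8 := min_le_right _ _
        _ ≤ 1 := by linarith

end aux

/-- If a metric space `(X,d)` has a perfect subspace `Y` (nonempty, every ball around
a point of `Y` contains another point of `Y`), then it contains a ball-tree: an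
assignment of a center `x s ∈ X` and radius `r s ∈ (0,1]` to every node `s` of the
complete infinite binary tree (nodes indexed by finite binary strings), such that
(i) if `(x s, r s)` is the parent of `(x s', r s')` then `d(x s, x s') + r s' < r s / 2`,
and (ii) the two children of any node satisfy `r₁ + r₂ < d(x₁, x₂)`. -/
theorem stmt_19 {X : Type*} [MetricSpace X] (Y : Set X) (hY : Y.Nonempty)
    (hperf : ∀ y ∈ Y, ∀ ρ : ℝ, 0 < ρ → ∃ z ∈ Y, z ≠ y ∧ dist z y < ρ) :
    ∃ (x : List Bool → X) (r : List Bool → ℝ),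
      (∀ s, r s ∈ Set.Ioc (0 : ℝ) 1) ∧
      (∀ s (b : Bool), dist (x s) (x (s ++ [b])) + r (s ++ [b]) < r s / 2) ∧
      (∀ s, r (s ++ [true]) + r (s ++ [false]) <
        dist (x (s ++ [true])) (x (s ++ [false]))) := by
  obtain ⟨y0, hy0⟩ := hY
  refine ⟨fun s => (treeAux Y hperf y0 s.reverse).1,
    fun s => (treeAux Y hperf y0 s.reverse).2, ?_, ?_, ?_⟩
  · intro s
    obtain ⟨_, h1, h2⟩ := treeAux_inv Y hperf y0 hy0 s.reverse
    exact ⟨h1, h2⟩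
  all_goals {
    intro s
    obtain ⟨hm, hpos, hle⟩ := treeAux_inv Y hperf y0 hy0 s.reverse
    set p := treeAux Y hperf y0 s.reverse with hp
    obtain ⟨hw1, hw2, hw3⟩ := pickAux_spec Y hperf hm (by linarith : (0:ℝ) < p.2 / 8)
    set w := pickAux Y hperf p.1 (p.2 / 8) with hw
    have hd : 0 < dist p.1 w := by rw [dist_comm]; exact dist_pos.mpr hw2
    have hd' : dist p.1 w < p.2 / 8 := by rw [dist_comm]; exact hw3
    have hrev : ∀ b : Bool, (s ++ [b]).reverse = b :: s.reverse := by
      intro b; simp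
    have hch : ∀ b : Bool, treeAux Y hperf y0 (s ++ [b]).reverse
        = childAux Y hperf b p := by
      intro b; rw [hrev b]; rfl
    beta_reduce
    first
    | · -- property (i)
        intro b
        rw [hch b]
        have hmin : min (dist p.1 w / 3) (p.2 / 8) ≤ p.2 / 8 := min_le_right _ _
        cases b
        · show dist p.1 w + min (dist p.1 w / 3) (p.2 / 8) < p.2 / 2
          linarith
        · show dist p.1 p.1 + min (dist p.1 w / 3) (p.2 / 8) < p.2 / 2
          rw [dist_self]; linarith
    | · -- property (ii)
        rw [hch true, hch false]
        show min (dist p.1 w / 3) (p.2 / 8) + min (dist p.1 w / 3) (p.2 / 8)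
          < dist p.1 w
        have hmin : min (dist p.1 w / 3) (p.2 / 8) ≤ dist p.1 w / 3 := min_le_left _ _
        linarith
  }
end
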